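/- arXiv:2412.17868 — 6 statements merged into one kernel-verified Lean document; each statement's English description precedes it below -/
import Mathlib

section
/- For any finite coloring of the natural numbers, there exist natural numbers a and b such that the set {a, b, a·b, (a+1)·b} is monochromatic (all four elements receive the same color). -/
open Filter Set

attribute [local instance] Ultrafilter.add Ultrafilter.addSemigroup

namespace MonoABHelper

/-- A "good" ultrafilter: additively idempotent, divisible and cofinal. -/
structure Good (q : Ultrafilter ℕ) : Prop where
  idem : q + q = q
  dvd : ∀ n : ℕ, 0 < n → {m : ℕ | n ∣ m} ∈ q
  cof : ∀ N : ℕ, {m : ℕ | N ≤ m} ∈ q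

lemma mem_add (U V : Ultrafilter ℕ) (S : Set ℕ) :
    S ∈ U + V ↔ {m : ℕ | {m' : ℕ | m + m' ∈ S} ∈ V} ∈ U := by
  have := Ultrafilter.eventually_add U V (· ∈ S)
  simpa [Filter.eventually_iff] using this

/-- There is a good ultrafilter. -/
lemma exists_good : ∃ q : Ultrafilter ℕ, Good q := by
  classical
  set Sn : ℕ → Set ℕ := fun n => {m | n.factorial ∣ m ∧ n ≤ m} with hSn
  have hSn_ne : ∀ n, (Sn n).Nonempty := by
    intro n
    refine ⟨(n + 1) * n.factorial, ⟨dvd_mul_left _ _, ?_⟩⟩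
    calc n ≤ n + 1 := Nat.le_succ n
    _ ≤ (n + 1) * n.factorial := Nat.le_mul_of_pos_right _ n.factorial_pos
  have hSn_anti : Antitone fun n => (𝓟 (Sn n) : Filter ℕ) := by
    apply antitone_nat_of_succ_le
    intro n
    refine Filter.principal_mono.mpr ?_
    intro m hm
    exact ⟨dvd_trans (Nat.factorial_dvd_factorial (Nat.le_succ n)) hm.1,
      le_trans (Nat.le_succ n) hm.2⟩
  have hF : (⨅ n, (𝓟 (Sn n) : Filter ℕ)).NeBot := by
    refine Filter.iInf_neBot_of_directed hSn_anti.directed_ge (fun n => ?_)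
    rw [Filter.principal_neBot_iff]
    exact hSn_ne n
  set q₁ : Ultrafilter ℕ := @Ultrafilter.of ℕ (⨅ n, (𝓟 (Sn n) : Filter ℕ)) hF with hq₁
  have hq₁mem : ∀ n, Sn n ∈ q₁ := by
    intro n
    have h1 : Sn n ∈ (⨅ n, (𝓟 (Sn n) : Filter ℕ)) :=
      Filter.mem_iInf_of_mem n (Filter.mem_principal_self _)
    exact (@Ultrafilter.of_le ℕ _ hF) h1
  set D : Set (Ultrafilter ℕ) :=
    {q | (∀ n : ℕ, 0 < n → {m : ℕ | n ∣ m} ∈ q) ∧ (∀ N : ℕ, {m : ℕ | N ≤ m} ∈ q)} with hD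
  have hq₁D : q₁ ∈ D := by
    constructor
    · intro n hn
      refine Filter.mem_of_superset (hq₁mem n) ?_
      intro m hm
      exact dvd_trans (Nat.dvd_factorial hn le_rfl) hm.1
    · intro N
      refine Filter.mem_of_superset (hq₁mem N) ?_
      intro m hm
      exact hm.2
  have hDclosed : IsClosed D := by
    have : D = (⋂ n : ℕ, ⋂ (_ : 0 < n), {q : Ultrafilter ℕ | {m : ℕ | n ∣ m} ∈ q}) ∩
        (⋂ N : ℕ, {q : Ultrafilter ℕ | {m : ℕ | N ≤ m} ∈ q}) := by
      ext q
      simp [hD, Set.mem_iInter]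
    rw [this]
    exact IsClosed.inter
      (isClosed_iInter fun n => isClosed_iInter fun _ => ultrafilter_isClosed_basic _)
      (isClosed_iInter fun N => ultrafilter_isClosed_basic _)
  have hDadd : ∀ x ∈ D, ∀ y ∈ D, x + y ∈ D := by
    intro x hx y hy
    constructor
    · intro n hn
      rw [mem_add]
      refine Filter.mem_of_superset (hx.1 n hn) ?_
      intro m hm
      refine Filter.mem_of_superset (hy.1 n hn) ?_
      intro m' hm'
      exact dvd_add hm hm'
    · intro N
      rw [mem_add]
      refine Filter.mem_of_superset (Filter.univ_mem) ?_
      intro m _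
      refine Filter.mem_of_superset (hy.2 N) ?_
      intro m' hm'
      exact le_trans hm' (Nat.le_add_left _ _)
  obtain ⟨q, hqD, hqidem⟩ :=
    exists_idempotent_in_compact_add_subsemigroup
      (Ultrafilter.continuous_add_left) D ⟨q₁, hq₁D⟩ hDclosed.isCompact hDadd
  exact ⟨q, hqidem, hqD.1, hqD.2⟩

/-- Division of an ultrafilter by a positive natural. -/
noncomputable def qdiv (x : ℕ) (q : Ultrafilter ℕ) : Ultrafilter ℕ :=
  q.map (· / x)

lemma mem_qdiv (x : ℕ) (q : Ultrafilter ℕ) (S : Set ℕ) :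
    S ∈ qdiv x q ↔ {m : ℕ | m / x ∈ S} ∈ q := Ultrafilter.mem_map

lemma good_qdiv {q : Ultrafilter ℕ} (hq : Good q) {x : ℕ} (hx : 0 < x) :
    Good (qdiv x q) := by
  constructor
  · -- idempotency
    apply Ultrafilter.coe_injective
    apply Filter.ext
    intro S
    show S ∈ (qdiv x q + qdiv x q : Ultrafilter ℕ) ↔ S ∈ qdiv x q
    have h1 : (S ∈ qdiv x q + qdiv x q) ↔
        {m : ℕ | {m' : ℕ | m / x + m' / x ∈ S} ∈ q} ∈ q := by
      rw [mem_add, mem_qdiv]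
      simp only [mem_qdiv, Set.mem_setOf_eq]
    have h2 : (S ∈ qdiv x q) ↔
        {m : ℕ | {m' : ℕ | (m + m') / x ∈ S} ∈ q} ∈ q := by
      rw [mem_qdiv]
      have hidem : ({m : ℕ | m / x ∈ S} ∈ q) ↔ {m : ℕ | m / x ∈ S} ∈ q + q := by
        rw [hq.idem]
      rw [hidem, mem_add]
      simp only [Set.mem_setOf_eq]
    have key2 : ∀ m : ℕ, x ∣ m → ∀ m' : ℕ, x ∣ m' →
        ((m / x + m' / x ∈ S) ↔ ((m + m') / x ∈ S)) := by
      rintro m ⟨a, rfl⟩ m' ⟨b, rfl⟩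
      rw [← Nat.mul_add, Nat.mul_div_cancel_left _ hx, Nat.mul_div_cancel_left _ hx,
        Nat.mul_div_cancel_left _ hx]
    have key : ∀ m : ℕ, x ∣ m →
        (({m' : ℕ | m / x + m' / x ∈ S} ∈ q) ↔ {m' : ℕ | (m + m') / x ∈ S} ∈ q) := by
      intro m hm
      constructor
      · intro h
        refine Filter.mem_of_superset (Filter.inter_mem h (hq.dvd x hx)) ?_
        rintro m' ⟨h1', h2'⟩
        exact (key2 m hm m' h2').mp h1'
      · intro h
        refine Filter.mem_of_superset (Filter.inter_mem h (hq.dvd x hx)) ?_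
        rintro m' ⟨h1', h2'⟩
        exact (key2 m hm m' h2').mpr h1'
    rw [h1, h2]
    constructor
    · intro h
      refine Filter.mem_of_superset (Filter.inter_mem h (hq.dvd x hx)) ?_
      rintro m ⟨h1', h2'⟩
      exact (key m h2').mp h1'
    · intro h
      refine Filter.mem_of_superset (Filter.inter_mem h (hq.dvd x hx)) ?_
      rintro m ⟨h1', h2'⟩
      exact (key m h2').mpr h1'
  · intro n hn
    rw [mem_qdiv]
    refine Filter.mem_of_superset (hq.dvd (x * n) (Nat.mul_pos hx hn)) ?_
    rintro m ⟨k, rfl⟩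
    show n ∣ x * n * k / x
    rw [mul_assoc, Nat.mul_div_cancel_left _ hx]
    exact Dvd.intro k rfl
  · intro N
    rw [mem_qdiv]
    refine Filter.mem_of_superset (hq.cof (N * x)) ?_
    intro m hm
    exact (Nat.le_div_iff_mul_le hx).mpr hm

section Main

variable {r : ℕ} (c : ℕ → Fin (r + 1))

/-- A pack: an ultrafilter level together with a large set of good elements. -/
structure Sig where
  q : Ultrafilter ℕ
  B : Set ℕ
  i : Fin (r + 1)
  good : Good q
  hB : B ∈ q
  pos : ∀ z ∈ B, 0 < z
  hcol : ∀ z ∈ B, c z = i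
  hstar : ∀ z ∈ B, {m' : ℕ | c (z + m') = i} ∈ q

lemma exists_class (q : Ultrafilter ℕ) : ∃ i : Fin (r + 1), {m : ℕ | c m = i} ∈ q := by
  by_contra h
  push_neg at h
  have h2 : ∀ i : Fin (r + 1), {m : ℕ | c m ≠ i} ∈ q := by
    intro i
    have := Ultrafilter.compl_mem_iff_notMem.mpr (h i)
    convert this using 1
    rfl
  have h3 : (⋂ i : Fin (r + 1), {m : ℕ | c m ≠ i}) ∈ q := by
    rw [← Ultrafilter.mem_coe]
    exact Filter.iInter_mem.mpr fun i => h2 i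
  obtain ⟨m, hm⟩ := Ultrafilter.nonempty_of_mem h3
  simp only [Set.mem_iInter, Set.mem_setOf_eq] at hm
  exact hm (c m) rfl

lemma star_mem {q : Ultrafilter ℕ} (hq : Good q) {A : Set ℕ} (hA : A ∈ q) :
    {z : ℕ | {m' : ℕ | z + m' ∈ A} ∈ q} ∈ q := by
  have h1 : A ∈ q + q := by rw [hq.idem]; exact hA
  rw [mem_add] at h1
  exact h1

lemma exists_sig_of_good (q : Ultrafilter ℕ) (hq : Good q) (extra : Set ℕ)
    (hextra : extra ∈ q) : ∃ s : Sig c, s.q = q ∧ s.B ⊆ extra := by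
  obtain ⟨i, hi⟩ := exists_class c q
  have hstar : {z : ℕ | {m' : ℕ | c (z + m') = i} ∈ q} ∈ q := by
    have := star_mem hq hi
    convert this using 2
    rfl
  set B : Set ℕ := extra ∩ ({m : ℕ | 1 ≤ m} ∩ ({m : ℕ | c m = i} ∩
      {z : ℕ | {m' : ℕ | c (z + m') = i} ∈ q})) with hBdef
  have hB : B ∈ q :=
    Filter.inter_mem hextra (Filter.inter_mem (hq.cof 1) (Filter.inter_mem hi hstar))
  refine ⟨⟨q, B, i, hq, hB, ?_, ?_, ?_⟩, rfl, ?_⟩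
  · intro z hz; exact hz.2.1
  · intro z hz; exact hz.2.2.1
  · intro z hz; exact hz.2.2.2
  · intro z hz; exact hz.1

noncomputable def xval (s : Sig c) : ℕ :=
  (Ultrafilter.nonempty_of_mem s.hB).choose

lemma xval_mem (s : Sig c) : xval c s ∈ s.B :=
  (Ultrafilter.nonempty_of_mem s.hB).choose_spec

lemma xval_pos (s : Sig c) : 0 < xval c s := s.pos _ (xval_mem c s)

lemma step_ex (s : Sig c) : ∃ t : Sig c, t.q = qdiv (xval c s) s.q ∧
    t.B ⊆ {z : ℕ | xval c s * z ∈ s.B} := by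
  apply exists_sig_of_good c _ (good_qdiv s.good (xval_pos c s))
  rw [mem_qdiv]
  refine Filter.mem_of_superset
    (Filter.inter_mem s.hB (s.good.dvd (xval c s) (xval_pos c s))) ?_
  rintro m ⟨hmB, hmd⟩
  show xval c s * (m / xval c s) ∈ s.B
  rw [Nat.mul_div_cancel' hmd]
  exact hmB

noncomputable def stepSig (s : Sig c) : Sig c := (step_ex c s).choose

lemma stepSig_q (s : Sig c) : (stepSig c s).q = qdiv (xval c s) s.q :=
  (step_ex c s).choose_spec.1

lemma stepSig_sub (s : Sig c) : (stepSig c s).B ⊆ {z : ℕ | xval c s * z ∈ s.B} :=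
  (step_ex c s).choose_spec.2

noncomputable def seq (s₀ : Sig c) : ℕ → Sig c
  | 0 => s₀
  | (k + 1) => stepSig c (seq s₀ k)

variable (s₀ : Sig c)

/-- Product of chosen elements between two levels. -/
noncomputable def X (k l : ℕ) : ℕ :=
  ∏ j ∈ Finset.Ico k l, xval c (seq c s₀ j)

lemma X_pos (k l : ℕ) : 0 < X c s₀ k l :=
  Finset.prod_pos fun j _ => xval_pos c _

lemma seq_q (k : ℕ) : ∀ d : ℕ, (seq c s₀ (k + d)).q =
    Ultrafilter.map (· / X c s₀ k (k + d)) (seq c s₀ k).q := by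
  intro d
  induction d with
  | zero =>
    simp only [Nat.add_zero]
    have h1 : X c s₀ k k = 1 := by simp [X]
    rw [h1]
    have h2 : ((· / 1) : ℕ → ℕ) = id := funext fun m => Nat.div_one m
    rw [h2, Ultrafilter.map_id]
  | succ d ih =>
    have h1 : seq c s₀ (k + (d + 1)) = stepSig c (seq c s₀ (k + d)) := by
      show seq c s₀ ((k + d) + 1) = _
      rfl
    rw [h1, stepSig_q, ih]
    unfold qdiv
    rw [Ultrafilter.map_map]
    have h2 : X c s₀ k (k + (d + 1)) = X c s₀ k (k + d) * xval c (seq c s₀ (k + d)) := by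
      show X c s₀ k ((k + d) + 1) = _
      unfold X
      rw [Finset.prod_Ico_succ_top (Nat.le_add_right k d)]
    rw [h2]
    congr 1
    funext m
    simp only [Function.comp_apply]
    exact Nat.div_div_eq_div_mul m _ _

lemma X_mem : ∀ (d k : ℕ), X c s₀ k (k + d + 1) ∈ (seq c s₀ k).B := by
  intro d
  induction d with
  | zero =>
    intro k
    have h1 : X c s₀ k (k + 0 + 1) = xval c (seq c s₀ k) := by
      unfold X
      rw [Finset.prod_Ico_succ_top (Nat.le_add_right k 0)]
      simp
    rw [h1]
    exact xval_mem c _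
  | succ d ih =>
    intro k
    have h1 : X c s₀ k (k + (d + 1) + 1) =
        xval c (seq c s₀ k) * X c s₀ (k + 1) ((k + 1) + d + 1) := by
      have hb : k + (d + 1) + 1 = (k + 1) + d + 1 := by omega
      unfold X
      rw [hb, Finset.prod_eq_prod_Ico_succ_bot (by omega : k < (k + 1) + d + 1)]
    rw [h1]
    have h2 := ih (k + 1)
    have h3 : seq c s₀ (k + 1) = stepSig c (seq c s₀ k) := rfl
    rw [h3] at h2
    exact stepSig_sub c (seq c s₀ k) h2

theorem main : ∃ a b : ℕ, 0 < a ∧ 0 < b ∧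
    c b = c a ∧ c (a * b) = c a ∧ c ((a + 1) * b) = c a := by
  classical
  obtain ⟨q₀, hq₀⟩ := exists_good
  obtain ⟨s₀, -, -⟩ := exists_sig_of_good c q₀ hq₀ Set.univ Filter.univ_mem
  have hcard : Fintype.card (Fin (r + 1)) < Fintype.card (Fin (r + 2)) := by simp
  obtain ⟨k₁, k₂, hne, heq⟩ :=
    Fintype.exists_ne_map_eq_of_card_lt (fun k : Fin (r + 2) => (seq c s₀ (k : ℕ)).i) hcard
  obtain ⟨k, l, hkl, hil⟩ : ∃ k l : ℕ, k < l ∧ (seq c s₀ k).i = (seq c s₀ l).i := by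
    rcases lt_or_gt_of_ne (fun h : (k₁ : ℕ) = (k₂ : ℕ) => hne (Fin.ext h)) with h | h
    · exact ⟨k₁, k₂, h, heq⟩
    · exact ⟨k₂, k₁, h, heq.symm⟩
  obtain ⟨d, rfl⟩ : ∃ d : ℕ, l = k + d + 1 := ⟨l - k - 1, by omega⟩
  set sk := seq c s₀ k with hsk
  set sl := seq c s₀ (k + d + 1) with hsl
  set i := sk.i with hi
  set x := X c s₀ k (k + d + 1) with hx
  have hxB : x ∈ sk.B := X_mem c s₀ d k
  have hxpos : 0 < x := X_pos c s₀ k (k + d + 1)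
  have hAl : {m : ℕ | c m = i} ∈ sl.q := by
    refine Filter.mem_of_superset sl.hB ?_
    intro z hz
    have := sl.hcol z hz
    simp only [Set.mem_setOf_eq]
    rw [this, ← hil]
  have hql : sl.q = Ultrafilter.map (· / x) sk.q := by
    have := seq_q c s₀ k (d + 1)
    rw [show k + (d + 1) = k + d + 1 from rfl] at this
    exact this
  have hdivmem : {m : ℕ | c (m / x) = i} ∈ sk.q := by
    rw [hql] at hAl
    exact Ultrafilter.mem_map.mp hAl
  have hclass_k : {m : ℕ | c m = i} ∈ sk.q := by
    refine Filter.mem_of_superset sk.hB ?_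
    intro z hz
    exact sk.hcol z hz
  have hSx : {m' : ℕ | c (x + m') = i} ∈ sk.q := sk.hstar x hxB
  have hdvdx : {m : ℕ | x ∣ m} ∈ sk.q := sk.good.dvd x hxpos
  have hge1 : {m : ℕ | 1 ≤ m} ∈ sk.q := sk.good.cof 1
  have hW : ({m : ℕ | c (m / x) = i} ∩ ({m : ℕ | c m = i} ∩
      ({m' : ℕ | c (x + m') = i} ∩ ({m : ℕ | x ∣ m} ∩ {m : ℕ | 1 ≤ m})))) ∈ sk.q :=
    Filter.inter_mem hdivmem (Filter.inter_mem hclass_k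
      (Filter.inter_mem hSx (Filter.inter_mem hdvdx hge1)))
  obtain ⟨u, hu1, hu2, hu3, hu4, hu5⟩ := Ultrafilter.nonempty_of_mem hW
  set z := u / x with hz
  have hzpos : 0 < z := by
    rw [hz]
    exact Nat.div_pos (Nat.le_of_dvd hu5 hu4) hxpos
  have hcx : c x = i := sk.hcol x hxB
  have hcz : c z = i := hu1
  refine ⟨z, x, hzpos, hxpos, ?_, ?_, ?_⟩
  · rw [hcx, hcz]
  · have h1 : z * x = u := Nat.div_mul_cancel hu4
    rw [h1, hcz]
    exact hu2
  · have h1 : (z + 1) * x = x + u := by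
      rw [add_mul, one_mul, Nat.div_mul_cancel hu4, add_comm]
    rw [h1, hcz]
    exact hu3

end Main

end MonoABHelper

/-- For any finite coloring of ℕ, there exist positive a, b with
{a, b, a·b, (a+1)·b} monochromatic. -/
theorem monochromatic_a_b_ab_a1b (r : ℕ) (c : ℕ → Fin r) :
    ∃ a b : ℕ, 0 < a ∧ 0 < b ∧
      c b = c a ∧ c (a * b) = c a ∧ c ((a + 1) * b) = c a := by
  match r, c with
  | 0, c => exact (c 0).elim0
  | (r + 1), c => exact MonoABHelper.main c
end

section
/- If A ⊆ ℕ is an IP set (i.e., A contains the set of all finite sums of distinct terms of some sequence of positive integers), then there exists y ∈ A such that (-y + A) ∩ A is also an IP set, where -y + A = {n : n + y ∈ A}. -/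
/-- The set of finite sums of distinct terms of the sequence `x`. -/
def FS (x : ℕ → ℕ) : Set ℕ :=
  {n | ∃ H : Finset ℕ, H.Nonempty ∧ ∑ i ∈ H, x i = n}

/-- `A` is an IP set: it contains the finite sums of some sequence of positive integers. -/
def IsIPSet (A : Set ℕ) : Prop :=
  ∃ x : ℕ → ℕ, (∀ i, 0 < x i) ∧ FS x ⊆ A

theorem ip_shift_inter (A : Set ℕ) (hA : IsIPSet A) :
    ∃ y ∈ A, IsIPSet ({n | n + y ∈ A} ∩ A) := by
  obtain ⟨x, hx, hFS⟩ := hA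
  refine ⟨x 0, hFS ⟨{0}, ⟨0, by simp⟩, by simp⟩, fun n => x (n + 1), fun i => hx _, ?_⟩
  rintro n ⟨H, hH, rfl⟩
  constructor
  · -- shifted membership
    have : ∑ i ∈ H, x (i + 1) + x 0 = ∑ i ∈ insert 0 (H.image (· + 1)), x i := by
      rw [Finset.sum_insert (by simp), Finset.sum_image (by intro a _ b _ h; simpa using h)]
      ring
    exact hFS ⟨insert 0 (H.image (· + 1)), ⟨0, Finset.mem_insert_self _ _⟩, this.symm⟩
  · have : ∑ i ∈ H, x (i + 1) = ∑ i ∈ H.image (· + 1), x i := by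
      rw [Finset.sum_image (by intro a _ b _ h; simpa using h)]
    exact hFS ⟨H.image (· + 1), hH.image _, this.symm⟩
end

section
/- Any finite coloring of an IP set contains a monochromatic IP subset. That is, if A ⊆ ℕ is an IP set and A = A₁ ∪ ⋯ ∪ A_r, then some A_i contains an IP set. -/
lemma hindmanFS_sub_FS (x : ℕ → ℕ) {m : ℕ} (hm : m ∈ Hindman.FS (x : Stream' ℕ)) :
    m ∈ FS x := by
  induction hm with
  | head' a => exact ⟨{0}, ⟨0, by simp⟩, by exact Finset.sum_singleton (fun i => a.get i) 0⟩
  | tail' a m h ih =>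
    obtain ⟨H, hne, hsum⟩ := ih
    refine ⟨H.image (· + 1), hne.image _, ?_⟩
    change ∑ i ∈ H.image (· + 1), a.get i = m
    rw [Finset.sum_image (by intro _ _ _ _ h; simpa using h)]
    exact hsum
  | cons' a m h ih =>
    obtain ⟨H, hne, hsum⟩ := ih
    refine ⟨insert 0 (H.image (· + 1)), ⟨0, by simp⟩, ?_⟩
    change ∑ i ∈ insert 0 (H.image (· + 1)), a.get i = a.head + m
    rw [Finset.sum_insert (by simp), Finset.sum_image (by intro _ _ _ _ h; simpa using h)]
    have : ∑ i ∈ H, a.tail.get i = m := hsum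
    simp only [Stream'.get, Stream'.tail] at this
    exact congrArg (a.head + ·) hsum

/-- Hindman's theorem: any finite coloring of an IP set contains a monochromatic IP subset. -/
theorem hindman_ip (A : Set ℕ) (hA : IsIPSet A) (r : ℕ) (P : Fin r → Set ℕ)
    (hcover : A ⊆ ⋃ i, P i) :
    ∃ i : Fin r, ∃ B : Set ℕ, B ⊆ P i ∧ IsIPSet B := by
  obtain ⟨x, hx, hxA⟩ := hA
  have hFSsub : ∀ m ∈ Hindman.FS (x : Stream' ℕ), m ∈ FS x := fun m hm =>
    hindmanFS_sub_FS x hm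
  set s : Set (Set ℕ) := Set.range (fun i => P i ∩ Hindman.FS (x : Stream' ℕ)) with hs
  have hsfin : s.Finite := Set.finite_range _
  have hcov : Hindman.FS (x : Stream' ℕ) ⊆ ⋃₀ s := by
    intro m hm
    have hmA : m ∈ A := hxA (hFSsub m hm)
    obtain ⟨_, ⟨i, rfl⟩, hi⟩ := hcover hmA
    exact ⟨P i ∩ Hindman.FS (x : Stream' ℕ), ⟨i, rfl⟩, hi, hm⟩
  obtain ⟨c, ⟨i, rfl⟩, b, hb⟩ := Hindman.FS_partition_regular (x : Stream' ℕ) s hsfin hcov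
  refine ⟨i, FS (fun n => b.get n), ?_, ?_⟩
  · rintro m ⟨H, hne, rfl⟩
    exact (hb (Hindman.FS.finset_sum b H hne)).1
  · refine ⟨fun n => b.get n, fun n => ?_, subset_rfl⟩
    have : b.get n ∈ Hindman.FS (x : Stream' ℕ) := (hb (Hindman.FS.singleton b n)).2
    obtain ⟨H, hne, hsum⟩ := hFSsub _ this
    obtain ⟨j, hj⟩ := hne
    have := hx j
    calc 0 < x j := hx j
    _ ≤ ∑ i ∈ H, x i := Finset.single_le_sum (fun _ _ => Nat.zero_le _) hj
    _ = b.get n := hsum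
end

section
/- For any finite coloring of ℕ and any IP set D ⊆ ℕ, there exist y ∈ D and an IP set D' ⊆ ℕ such that for all x ∈ D', both x·y ∈ D and x·y + y ∈ D, and D' is contained in a single color class. -/
/-- Every element of Hindman's `FS` is a finite sum over a nonempty finset of indices. -/
lemma hindmanFS_to_sum {a : Stream' ℕ} {n : ℕ} (h : n ∈ Hindman.FS a) :
    ∃ H : Finset ℕ, H.Nonempty ∧ ∑ i ∈ H, a.get i = n := by
  induction h with
  | head' a => exact ⟨{0}, ⟨0, by simp⟩, by simp [Stream'.head]⟩
  | tail' a m h ih =>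
      obtain ⟨H, hne, hsum⟩ := ih
      refine ⟨H.image (· + 1), hne.image _, ?_⟩
      rw [Finset.sum_image (by intro a _ b _ h; exact Nat.succ_injective h)]
      simpa using hsum
  | cons' a m h ih =>
      obtain ⟨H, hne, hsum⟩ := ih
      refine ⟨insert 0 (H.image (· + 1)), ⟨0, Finset.mem_insert_self _ _⟩, ?_⟩
      rw [Finset.sum_insert (by simp), Finset.sum_image (by intro a _ b _ h; exact Nat.succ_injective h)]
      simp only [Stream'.get_tail] at hsum
      rw [hsum]

/-- Pigeonhole: beyond any index `k` there is a window whose sum is divisible by `d`. -/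
lemma exists_window (x : ℕ → ℕ) (d k : ℕ) (hd : 0 < d) :
    ∃ ab : ℕ × ℕ, k ≤ ab.1 ∧ ab.1 < ab.2 ∧ d ∣ ∑ i ∈ Finset.Ico ab.1 ab.2, x i := by
  obtain ⟨j1, -, j2, -, hne, heq⟩ :
      ∃ j1 ∈ Finset.range (d + 1), ∃ j2 ∈ Finset.range (d + 1), j1 ≠ j2 ∧
        (∑ i ∈ Finset.Ico k (k + j1), x i) % d = (∑ i ∈ Finset.Ico k (k + j2), x i) % d := by
    apply Finset.exists_ne_map_eq_of_card_lt_of_maps_to (t := Finset.range d)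
    · simp
    · intro j _
      exact Finset.mem_range.mpr (Nat.mod_lt _ hd)
  have key : ∀ j1 j2 : ℕ, j1 < j2 →
      (∑ i ∈ Finset.Ico k (k + j1), x i) % d = (∑ i ∈ Finset.Ico k (k + j2), x i) % d →
      ∃ ab : ℕ × ℕ, k ≤ ab.1 ∧ ab.1 < ab.2 ∧ d ∣ ∑ i ∈ Finset.Ico ab.1 ab.2, x i := by
    intro j1 j2 hlt heq
    refine ⟨(k + j1, k + j2), Nat.le_add_right _ _, by omega, ?_⟩
    have hsplit : (∑ i ∈ Finset.Ico k (k + j1), x i) +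
        ∑ i ∈ Finset.Ico (k + j1) (k + j2), x i = ∑ i ∈ Finset.Ico k (k + j2), x i :=
      Finset.sum_Ico_consecutive _ (by omega) (by omega)
    have hmod : (∑ i ∈ Finset.Ico k (k + j1), x i) ≡
        (∑ i ∈ Finset.Ico k (k + j2), x i) [MOD d] := heq
    have h1 : (∑ i ∈ Finset.Ico k (k + j1), x i) ≤ ∑ i ∈ Finset.Ico k (k + j2), x i := by omega
    have := (Nat.modEq_iff_dvd' h1).mp hmod
    have heq2 : (∑ i ∈ Finset.Ico k (k + j2), x i) - (∑ i ∈ Finset.Ico k (k + j1), x i)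
        = ∑ i ∈ Finset.Ico (k + j1) (k + j2), x i := by omega
    rwa [heq2] at this
  rcases lt_or_gt_of_ne hne with h | h
  · exact key _ _ h heq
  · exact key _ _ h heq.symm

/-- Key inductive step: given a coloring and an IP set D, there are y ∈ D and a
monochromatic IP set D' with x·y ∈ D and x·y + y ∈ D for all x ∈ D'. -/
theorem key_inductive_step (r : ℕ) (c : ℕ → Fin r) (D : Set ℕ) (hD : IsIPSet D) :
    ∃ y ∈ D, ∃ D' : Set ℕ, IsIPSet D' ∧
      (∀ x ∈ D', x * y ∈ D ∧ x * y + y ∈ D) ∧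
      ∃ k : Fin r, ∀ x ∈ D', c x = k := by
  obtain ⟨x, hxpos, hxD⟩ := hD
  set d : ℕ := x 0 with hd_def
  have hd : 0 < d := hxpos 0
  -- recursively chosen windows
  let p : ℕ → ℕ × ℕ := fun n => Nat.rec (Classical.choose (exists_window x d 1 hd))
    (fun _ prev => Classical.choose (exists_window x d prev.2 hd)) n
  have hp0 : 1 ≤ (p 0).1 ∧ (p 0).1 < (p 0).2 ∧
      d ∣ ∑ i ∈ Finset.Ico (p 0).1 (p 0).2, x i :=
    Classical.choose_spec (exists_window x d 1 hd)
  have hpS : ∀ n, (p n).2 ≤ (p (n + 1)).1 ∧ (p (n + 1)).1 < (p (n + 1)).2 ∧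
      d ∣ ∑ i ∈ Finset.Ico (p (n + 1)).1 (p (n + 1)).2, x i := fun n =>
    Classical.choose_spec (exists_window x d (p n).2 hd)
  have hlt : ∀ n, (p n).1 < (p n).2 := by
    intro n; cases n with
    | zero => exact hp0.2.1
    | succ n => exact (hpS n).2.1
  have hdvd : ∀ n, d ∣ ∑ i ∈ Finset.Ico (p n).1 (p n).2, x i := by
    intro n; cases n with
    | zero => exact hp0.2.2
    | succ n => exact (hpS n).2.2
  have hmonoA : StrictMono (fun n => (p n).1) :=
    strictMono_nat_of_lt_succ fun n => lt_of_lt_of_le (hlt n) (hpS n).1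
  have hA1 : ∀ n, 1 ≤ (p n).1 := fun n =>
    le_trans hp0.1 (hmonoA.monotone (Nat.zero_le n))
  have hsep : ∀ {j j' : ℕ}, j < j' → (p j).2 ≤ (p j').1 := by
    intro j j' hjj
    calc (p j).2 ≤ (p (j + 1)).1 := (hpS j).1
    _ ≤ (p j').1 := hmonoA.monotone hjj
  -- the generating sequence of quotients
  let m : ℕ → ℕ := fun n => (∑ i ∈ Finset.Ico (p n).1 (p n).2, x i) / d
  have hmd : ∀ n, m n * d = ∑ i ∈ Finset.Ico (p n).1 (p n).2, x i := fun n =>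
    Nat.div_mul_cancel (hdvd n)
  have hmpos : ∀ n, 0 < m n := by
    intro n
    have hsum : 0 < ∑ i ∈ Finset.Ico (p n).1 (p n).2, x i :=
      Finset.sum_pos (fun i _ => hxpos i) (by simp [Finset.nonempty_Ico, hlt n])
    have hpos : 0 < m n * d := by rw [hmd n]; exact hsum
    exact Nat.pos_of_ne_zero fun h => by simp [h] at hpos
  -- sums of the m's land in B
  have hkey : ∀ H : Finset ℕ, H.Nonempty →
      (∑ j ∈ H, m j) * d ∈ D ∧ (∑ j ∈ H, m j) * d + d ∈ D := by
    intro H hne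
    have hdisj : (↑H : Set ℕ).PairwiseDisjoint
        (fun j => Finset.Ico (p j).1 (p j).2) := by
      intro j _ j' _ hjj
      refine Finset.disjoint_left.mpr fun i hi hi' => ?_
      rw [Finset.mem_Ico] at hi hi'
      rcases lt_or_gt_of_ne hjj with h | h
      · have := hsep h; omega
      · have := hsep h; omega
    have hsum : (∑ j ∈ H, m j) * d = ∑ i ∈ H.biUnion (fun j => Finset.Ico (p j).1 (p j).2), x i := by
      rw [Finset.sum_mul]
      rw [Finset.sum_biUnion hdisj]
      exact Finset.sum_congr rfl fun j _ => hmd j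
    obtain ⟨j0, hj0⟩ := hne
    have hbne : (H.biUnion (fun j => Finset.Ico (p j).1 (p j).2)).Nonempty :=
      ⟨(p j0).1, Finset.mem_biUnion.mpr ⟨j0, hj0, Finset.mem_Ico.mpr ⟨le_refl _, hlt j0⟩⟩⟩
    have h0notin : 0 ∉ H.biUnion (fun j => Finset.Ico (p j).1 (p j).2) := by
      intro h0
      obtain ⟨j, -, hj⟩ := Finset.mem_biUnion.mp h0
      rw [Finset.mem_Ico] at hj
      have := hA1 j; omega
    constructor
    · exact hxD ⟨_, hbne, hsum.symm⟩
    · refine hxD ⟨insert 0 (H.biUnion (fun j => Finset.Ico (p j).1 (p j).2)),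
        ⟨0, Finset.mem_insert_self _ _⟩, ?_⟩
      rw [Finset.sum_insert h0notin, ← hsum, hd_def]
      omega
  -- Hindman's theorem for a monochromatic refinement
  set mst : Stream' ℕ := m with hmst
  have hcov : Hindman.FS mst ⊆
      ⋃₀ (Set.range fun k : Fin r => {n | c n = k} ∩ Hindman.FS mst) := by
    intro n hn
    exact ⟨{n' | c n' = c n} ∩ Hindman.FS mst, ⟨c n, rfl⟩, rfl, hn⟩
  obtain ⟨cell, ⟨k, rfl⟩, b, hb⟩ :=
    Hindman.FS_partition_regular mst _ (Set.finite_range _) hcov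
  -- membership in `FS mst` gives membership in the target set
  have hFSm : ∀ n ∈ Hindman.FS mst, 0 < n ∧ n * d ∈ D ∧ n * d + d ∈ D := by
    intro n hn
    obtain ⟨H, hne, hsum⟩ := hindmanFS_to_sum hn
    have hget : ∀ i ∈ H, mst.get i = m i := fun i _ => rfl
    rw [Finset.sum_congr rfl hget] at hsum
    subst hsum
    obtain ⟨j0, hj0⟩ := hne
    refine ⟨?_, hkey H ⟨j0, hj0⟩⟩
    exact Finset.sum_pos' (fun i _ => Nat.zero_le _) ⟨j0, hj0, hmpos j0⟩
  refine ⟨d, hxD ⟨{0}, ⟨0, by simp⟩, by simp [hd_def]⟩, FS b.get, ?_, ?_, k, ?_⟩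
  · refine ⟨b.get, fun i => ?_, subset_rfl⟩
    have hbi : b.get i ∈ Hindman.FS b := Hindman.FS.singleton b i
    exact (hFSm _ (hb hbi).2).1
  · rintro n ⟨H, hne, hsum⟩
    have hn : n ∈ Hindman.FS b := by
      rw [← hsum]
      exact Hindman.FS.finset_sum b H hne
    exact (hFSm _ (hb hn).2).2
  · rintro n ⟨H, hne, hsum⟩
    have hn : n ∈ Hindman.FS b := by
      rw [← hsum]
      exact Hindman.FS.finset_sum b H hne
    exact (hb hn).1
end

section
/- The family of sets of the form {a, b, a·b, (a+1)·b} with a, b positive integers is partition regular: for every partition of ℕ into finitely many classes, some class contains such a set. -/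
/-
We prove that the family {a, b, a*b, (a+1)*b} is partition regular.

Strategy (iterated Hindman):
* A "stage" is a sequence `s : ℕ → ℕ` of positive integers together with a color `γ`
  such that every finite (nonempty) subset-sum of `s` has color `γ` (predicate `Mono`).
* Given a stage `s`, let `d := s 0`.  Using pigeonhole on prefix sums, the tail of `s`
  can be grouped into infinitely many disjoint blocks whose sums are divisible by `d`.
  Applying Hindman's theorem (in the semigroup `ℕ × Multiset ℕ`, to keep track of
  supports) to the sequence of quotients produces a new stage `s'` (with some color
  `γ'`) such that `d * s' k` is a sum of `s` over disjoint blocks; moreover prepending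
  the value `1` to `s'` keeps this property (block `{0}` for the new head).
  This relation is the predicate `Emb (cons1 s') s d`.
* `Emb` composes (multiplying the divisors), so stage `j` embeds into stage `i` for
  any `i < j`, via some multiplier `E` which is itself a subset-sum of stage `i`.
* Running r+1 stages, two stages `i < j` get the same color `γ`.  With
  `a := (stage j) 0` and `b := E` the four numbers `a, b, a*b, (a+1)*b` all have
  color `γ`: indeed `a` is a subset-sum of stage `j`; and `b`, `a*b`, `a*b + b`
  are subset-sums of stage `i` over disjoint blocks.
-/

open Finset

attribute [local instance] Ultrafilter.semigroup Ultrafilter.addSemigroup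

namespace PRConfig

/-- The tagged monoid: values together with (multisets of) indices used. -/
abbrev M : Type := ℕ × Multiset ℕ

/-- All nonempty finite subset-sums of `s` have color `γ`. -/
def Mono {r : ℕ} (c : ℕ → Fin r) (s : ℕ → ℕ) (γ : Fin r) : Prop :=
  ∀ H : Finset ℕ, H.Nonempty → c (∑ k ∈ H, s k) = γ

/-- `d * u k` is a sum of `s` over pairwise disjoint nonempty blocks. -/
def Emb (u s : ℕ → ℕ) (d : ℕ) : Prop :=
  ∃ B : ℕ → Finset ℕ, (∀ k, (B k).Nonempty) ∧
    (∀ k l, k ≠ l → Disjoint (B k) (B l)) ∧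
    (∀ k, d * u k = ∑ i ∈ B k, s i)

/-- prepend `1` to a sequence. -/
def cons1 (u : ℕ → ℕ) : ℕ → ℕ
  | 0 => 1
  | n + 1 => u n

@[simp] lemma cons1_zero (u : ℕ → ℕ) : cons1 u 0 = 1 := rfl
@[simp] lemma cons1_succ (u : ℕ → ℕ) (n : ℕ) : cons1 u (n + 1) = u n := rfl

lemma Emb.comp {u s w : ℕ → ℕ} {e d : ℕ}
    (h1 : Emb u s e) (h2 : Emb s w d) : Emb u w (d * e) := by
  obtain ⟨B, hBne, hBd, hBs⟩ := h1
  obtain ⟨C, hCne, hCd, hCs⟩ := h2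
  refine ⟨fun k => (B k).biUnion C, ?_, ?_, ?_⟩
  · intro k
    obtain ⟨i, hi⟩ := hBne k
    obtain ⟨x, hx⟩ := hCne i
    exact ⟨x, Finset.mem_biUnion.2 ⟨i, hi, hx⟩⟩
  · intro k l hkl
    rw [Finset.disjoint_left]
    intro x hx hx'
    obtain ⟨i, hi, hxi⟩ := Finset.mem_biUnion.1 hx
    obtain ⟨i', hi', hxi'⟩ := Finset.mem_biUnion.1 hx'
    rcases eq_or_ne i i' with rfl | hne
    · exact Finset.disjoint_left.1 (hBd k l hkl) hi hi'
    · exact Finset.disjoint_left.1 (hCd i i' hne) hxi hxi'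
  · intro k
    have : (d * e) * u k = d * (e * u k) := by ring
    rw [this, hBs k, Finset.mul_sum]
    rw [Finset.sum_biUnion]
    · exact Finset.sum_congr rfl fun i _ => hCs i
    · intro i hi i' hi' hne
      exact hCd i i' hne

lemma Emb.tail {v s : ℕ → ℕ} {E : ℕ} (h : Emb (cons1 v) s E) : Emb v s E := by
  obtain ⟨B, hBne, hBd, hBs⟩ := h
  exact ⟨fun k => B (k + 1), fun k => hBne _,
    fun k l hkl => hBd _ _ (by omega), fun k => hBs (k + 1)⟩

/-! ### Pigeonhole: blocks with sums divisible by `d` -/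

lemma exists_block (t : ℕ → ℕ) (d : ℕ) (hd : 0 < d) (n : ℕ) :
    ∃ p : ℕ × ℕ, n ≤ p.1 ∧ p.1 < p.2 ∧ d ∣ ∑ i ∈ Finset.Ico p.1 p.2, t i := by
  have hmaps : ∀ x ∈ Finset.Icc n (n + d),
      (∑ i ∈ Finset.range x, t i) % d ∈ Finset.range d :=
    fun x _ => Finset.mem_range.2 (Nat.mod_lt _ hd)
  have hcard : (Finset.range d).card < (Finset.Icc n (n + d)).card := by
    rw [Nat.card_Icc, Finset.card_range]; omega
  obtain ⟨x, hx, y, hy, hxy, hfxy⟩ :=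
    Finset.exists_ne_map_eq_of_card_lt_of_maps_to hcard hmaps
  rw [Finset.mem_Icc] at hx hy
  -- wlog x < y
  rcases hxy.lt_or_gt with h | h
  · refine ⟨(x, y), hx.1, h, ?_⟩
    have hle : (∑ i ∈ Finset.range x, t i) ≤ ∑ i ∈ Finset.range y, t i :=
      Finset.sum_le_sum_of_subset (Finset.range_subset_range.2 h.le)
    have hdvd : d ∣ (∑ i ∈ Finset.range y, t i) - ∑ i ∈ Finset.range x, t i :=
      (Nat.modEq_iff_dvd' hle).1 hfxy
    have hsum : (∑ i ∈ Finset.range x, t i) + ∑ i ∈ Finset.Ico x y, t i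
        = ∑ i ∈ Finset.range y, t i := by
      rw [Finset.range_eq_Ico, Finset.range_eq_Ico]
      exact Finset.sum_Ico_consecutive _ (Nat.zero_le _) h.le
    have : (∑ i ∈ Finset.Ico x y, t i)
        = (∑ i ∈ Finset.range y, t i) - ∑ i ∈ Finset.range x, t i := by omega
    rwa [this]
  · refine ⟨(y, x), hy.1, h, ?_⟩
    have hle : (∑ i ∈ Finset.range y, t i) ≤ ∑ i ∈ Finset.range x, t i :=
      Finset.sum_le_sum_of_subset (Finset.range_subset_range.2 h.le)
    have hdvd : d ∣ (∑ i ∈ Finset.range x, t i) - ∑ i ∈ Finset.range y, t i :=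
      (Nat.modEq_iff_dvd' hle).1 hfxy.symm
    have hsum : (∑ i ∈ Finset.range y, t i) + ∑ i ∈ Finset.Ico y x, t i
        = ∑ i ∈ Finset.range x, t i := by
      rw [Finset.range_eq_Ico, Finset.range_eq_Ico]
      exact Finset.sum_Ico_consecutive _ (Nat.zero_le _) h.le
    have : (∑ i ∈ Finset.Ico y x, t i)
        = (∑ i ∈ Finset.range x, t i) - ∑ i ∈ Finset.range y, t i := by omega
    rwa [this]

/-- Infinitely many disjoint (interval) blocks with sums divisible by `d`. -/
lemma exists_blocks (t : ℕ → ℕ) (d : ℕ) (hd : 0 < d) :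
    ∃ I : ℕ → Finset ℕ, (∀ k, (I k).Nonempty) ∧
      (∀ k l, k ≠ l → Disjoint (I k) (I l)) ∧
      (∀ k, d ∣ ∑ i ∈ I k, t i) := by
  -- iterate `exists_block`
  let g : ℕ → ℕ × ℕ := fun k => Nat.rec ((exists_block t d hd 0).choose)
    (fun _ p => (exists_block t d hd p.2).choose) k
  have hg0 : g 0 = (exists_block t d hd 0).choose := rfl
  have hgs : ∀ k, g (k + 1) = (exists_block t d hd (g k).2).choose := fun k => rfl
  have hprop : ∀ k, (g k).1 < (g k).2 ∧ d ∣ ∑ i ∈ Finset.Ico (g k).1 (g k).2, t i := by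
    intro k
    cases k with
    | zero =>
      have h := (exists_block t d hd 0).choose_spec
      exact ⟨(hg0 ▸ h.2.1), (hg0 ▸ h.2.2)⟩
    | succ k =>
      have h := (exists_block t d hd (g k).2).choose_spec
      exact ⟨(hgs k ▸ h.2.1), (hgs k ▸ h.2.2)⟩
  have hstart : ∀ k, (g k).2 ≤ (g (k + 1)).1 := by
    intro k
    have h := (exists_block t d hd (g k).2).choose_spec
    exact (hgs k ▸ h.1)
  have hmono : ∀ k l, k < l → (g k).2 ≤ (g l).1 := by
    intro k l hkl
    induction l with
    | zero => omega
    | succ l ih =>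
      rcases Nat.lt_or_ge k l with h | h
      · exact le_trans (ih h) (le_trans (hprop l).1.le (hstart l))
      · have : k = l := by omega
        subst this
        exact hstart k
  refine ⟨fun k => Finset.Ico (g k).1 (g k).2, ?_, ?_, fun k => (hprop k).2⟩
  · intro k
    exact Finset.nonempty_Ico.2 (hprop k).1
  · intro k l hkl
    rw [Finset.disjoint_left]
    intro x hx hx'
    rw [Finset.mem_Ico] at hx hx'
    rcases hkl.lt_or_gt with h | h
    · have := hmono k l h; omega
    · have := hmono l k h; omega

/-! ### Hindman step -/

/-- Ordered coherent stream of tagged elements relative to `q`. -/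
def OC (q : ℕ → ℕ) (v : Stream' M) : Prop :=
  (∀ k, (v.get k).2 ≠ 0 ∧ (v.get k).2.Nodup ∧
    (v.get k).1 = ((v.get k).2.map q).sum) ∧
  (∀ k l, k < l → ∀ i ∈ (v.get k).2, ∀ j ∈ (v.get l).2, i < j)

lemma OC.tail {q : ℕ → ℕ} {v : Stream' M} (h : OC q v) : OC q v.tail := by
  refine ⟨fun k => h.1 (k + 1), fun k l hkl i hi j hj => ?_⟩
  exact h.2 (k + 1) (l + 1) (by omega) i hi j hj

lemma coherent {q : ℕ → ℕ} {v : Stream' M} {z : M} (hz : z ∈ Hindman.FS v) :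
    OC q v → z.2 ≠ 0 ∧ z.2.Nodup ∧ z.1 = (z.2.map q).sum ∧
      ∀ i ∈ z.2, ∃ k, i ∈ (v.get k).2 := by
  induction hz with
  | head' a =>
    intro hv
    obtain ⟨h0, h1, h2⟩ := hv.1 0
    exact ⟨h0, h1, h2, fun i hi => ⟨0, hi⟩⟩
  | tail' a m _ ih =>
    intro hv
    obtain ⟨h0, h1, h2, h3⟩ := ih hv.tail
    exact ⟨h0, h1, h2, fun i hi => by
      obtain ⟨k, hk⟩ := h3 i hi
      exact ⟨k + 1, hk⟩⟩
  | cons' a m _ ih =>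
    intro hv
    obtain ⟨h0, h1, h2, h3⟩ := ih hv.tail
    obtain ⟨g0, g1, g2⟩ := hv.1 0
    have hdisj : Disjoint (a.head).2 m.2 := by
      rw [Multiset.disjoint_left]
      intro x hx hx'
      obtain ⟨k, hk⟩ := h3 x hx'
      have := hv.2 0 (k + 1) (by omega) x hx x hk
      omega
    constructor
    · show (a.head).2 + m.2 ≠ 0
      intro h
      obtain ⟨x, hx⟩ := Multiset.exists_mem_of_ne_zero h0
      have hx2 : x ∈ (a.head).2 + m.2 := Multiset.mem_add.2 (Or.inr hx)
      rw [h] at hx2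
      exact Multiset.notMem_zero x hx2
    refine ⟨?_, ?_, ?_⟩
    · show ((a.head).2 + m.2).Nodup
      exact Multiset.nodup_add.2 ⟨g1, h1, hdisj⟩
    · show (a.head).1 + m.1 = (((a.head).2 + m.2).map q).sum
      rw [Multiset.map_add, Multiset.sum_add, g2, h2]
    · intro i hi
      rw [show ((a.head + m).2) = (a.head).2 + m.2 from rfl] at hi
      rcases Multiset.mem_add.1 hi with h | h
      · exact ⟨0, h⟩
      · obtain ⟨k, hk⟩ := h3 i h
        exact ⟨k + 1, hk⟩

/-- The key Hindman step: from a positive sequence `q`, extract a color `γ`, a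
sequence `u` of disjoint nonempty block-sums of `q`, all of whose finite
subset-sums have color `γ`. -/
lemma stage {r : ℕ} (c : ℕ → Fin r) (q : ℕ → ℕ) (hq : ∀ k, 0 < q k) :
    ∃ (γ : Fin r) (u : ℕ → ℕ) (G : ℕ → Finset ℕ),
      (∀ k, (G k).Nonempty) ∧ (∀ k l, k ≠ l → Disjoint (G k) (G l)) ∧
      (∀ k, u k = ∑ i ∈ G k, q i) ∧ Mono c u γ := by
  classical
  set aa : Stream' M := fun k => (q k, {k}) with haa
  have hOC : OC q aa := by
    constructor
    · intro k
      have hk : aa.get k = (q k, {k}) := rfl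
      rw [hk]
      exact ⟨by simp, by simp, by simp⟩
    · intro k l hkl i hi j hj
      have hk : aa.get k = (q k, {k}) := rfl
      have hl : aa.get l = (q l, {l}) := rfl
      rw [hk] at hi
      rw [hl] at hj
      simp only [Multiset.mem_singleton] at hi hj
      omega
  obtain ⟨U, hidem, hU⟩ := Hindman.exists_idempotent_ultrafilter_le_FS aa
  have hcls : (⋃ i : Fin r, {x : M | c x.1 = i}) ∈ U := by
    have : (⋃ i : Fin r, {x : M | c x.1 = i}) = Set.univ := by
      ext x
      simp only [Set.mem_iUnion, Set.mem_setOf_eq, Set.mem_univ, iff_true]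
      exact ⟨c x.1, rfl⟩
    rw [this]; exact Filter.univ_mem
  have := (Ultrafilter.finite_biUnion_mem_iff (Set.finite_univ)).1 (by
    simpa [Set.biUnion_univ] using hcls)
  obtain ⟨γ, -, hγU⟩ := this
  have hFSU : {m : M | m ∈ Hindman.FS aa} ∈ U := hU
  obtain ⟨b, hb⟩ := Hindman.exists_FS_of_large U hidem
    ({x : M | c x.1 = γ} ∩ {m : M | m ∈ Hindman.FS aa})
    (Filter.inter_mem hγU hFSU)
  -- b : Stream' M with FS b ⊆ class γ ∩ FS aa
  have hcoh : ∀ z ∈ Hindman.FS b, z.2 ≠ 0 ∧ z.2.Nodup ∧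
      z.1 = (z.2.map q).sum ∧ True := by
    intro z hz
    have hz' := hb hz
    obtain ⟨h0, h1, h2, -⟩ := coherent hz'.2 hOC
    exact ⟨h0, h1, h2, trivial⟩
  have hsingle : ∀ k, b.get k ∈ Hindman.FS b := fun k => Hindman.FS.singleton b k
  -- the blocks
  have hnodup : ∀ k, (b.get k).2.Nodup := fun k => (hcoh _ (hsingle k)).2.1
  refine ⟨γ, fun k => (b.get k).1, fun k => ⟨(b.get k).2, hnodup k⟩, ?_, ?_, ?_, ?_⟩
  · intro k
    obtain ⟨x, hx⟩ := Multiset.exists_mem_of_ne_zero (hcoh _ (hsingle k)).1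
    exact ⟨x, hx⟩
  · intro k l hkl
    have hpair : ∀ k l, k < l → Disjoint (b.get k).2 (b.get l).2 := by
      intro k l hkl'
      have hadd : b.get k + b.get l ∈ Hindman.FS b := Hindman.FS.add_two b k l hkl'
      have := (hcoh _ hadd).2.1
      have : ((b.get k).2 + (b.get l).2).Nodup := this
      exact Multiset.disjoint_of_nodup_add this
    rw [Finset.disjoint_left]
    intro x hx hx'
    simp only [Finset.mem_mk] at hx hx'
    rcases hkl.lt_or_gt with h | h
    · exact Multiset.disjoint_left.1 (hpair k l h) hx hx'
    · exact Multiset.disjoint_left.1 (hpair l k h) hx' hx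
  · intro k
    have h := (hcoh _ (hsingle k)).2.2.1
    show (b.get k).1 = ∑ i ∈ Finset.mk (b.get k).2 (hnodup k), q i
    rw [Finset.sum_eq_multiset_sum]
    exact h
  · intro H hH
    have hsum : (∑ k ∈ H, b.get k) ∈ Hindman.FS b :=
      Hindman.FS.finset_sum b H hH
    have hmem := (hb hsum).1
    have hfst : (∑ k ∈ H, b.get k).1 = ∑ k ∈ H, (b.get k).1 := Prod.fst_sum
    show c (∑ k ∈ H, (b.get k).1) = γ
    rw [← hfst]
    exact hmem

/-! ### The step between stages -/

lemma step {r : ℕ} (c : ℕ → Fin r) (s : ℕ → ℕ) (hs : ∀ k, 0 < s k) :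
    ∃ (s' : ℕ → ℕ) (γ' : Fin r), (∀ k, 0 < s' k) ∧ Mono c s' γ' ∧
      Emb (cons1 s') s (s 0) := by
  classical
  set d := s 0 with hd
  have hdpos : 0 < d := hs 0
  set t : ℕ → ℕ := fun k => s (k + 1) with ht
  obtain ⟨I, hIne, hIdis, hIdvd⟩ := exists_blocks t d hdpos
  set q : ℕ → ℕ := fun k => (∑ i ∈ I k, t i) / d with hqdef
  have hdq : ∀ k, d * q k = ∑ i ∈ I k, t i := fun k =>
    Nat.mul_div_cancel' (hIdvd k)
  have hqpos : ∀ k, 0 < q k := by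
    intro k
    have hpos : 0 < ∑ i ∈ I k, t i :=
      Finset.sum_pos (fun i _ => hs _) (hIne k)
    have h2 := hdq k
    rcases Nat.eq_zero_or_pos (q k) with h | h
    · rw [h, Nat.mul_zero] at h2; omega
    · exact h
  obtain ⟨γ, u, G, hGne, hGdis, hGsum, hmono⟩ := stage c q hqpos
  have hupos : ∀ k, 0 < u k := by
    intro k
    rw [hGsum k]
    exact Finset.sum_pos (fun i _ => hqpos i) (hGne k)
  refine ⟨u, γ, hupos, hmono, ?_⟩
  refine ⟨fun k => Nat.rec {0} (fun k _ => ((G k).biUnion I).image (· + 1)) k,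
    ?_, ?_, ?_⟩
  · intro k
    cases k with
    | zero => exact ⟨0, by simp⟩
    | succ k =>
      obtain ⟨i, hi⟩ := hGne k
      obtain ⟨x, hx⟩ := hIne i
      exact ⟨x + 1, Finset.mem_image.2 ⟨x, Finset.mem_biUnion.2 ⟨i, hi, hx⟩, rfl⟩⟩
  · intro k l hkl
    have himg : ∀ k l, k ≠ l →
        Disjoint (((G k).biUnion I).image (· + 1)) (((G l).biUnion I).image (· + 1)) := by
      intro k l hkl'
      rw [Finset.disjoint_left]
      intro x hx hx'
      obtain ⟨y, hy, rfl⟩ := Finset.mem_image.1 hx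
      obtain ⟨y', hy', hyy⟩ := Finset.mem_image.1 hx'
      have : y' = y := by omega
      subst this
      obtain ⟨i, hi, hyi⟩ := Finset.mem_biUnion.1 hy
      obtain ⟨i', hi', hyi'⟩ := Finset.mem_biUnion.1 hy'
      rcases eq_or_ne i i' with rfl | hne
      · exact Finset.disjoint_left.1 (hGdis k l hkl') hi hi'
      · exact Finset.disjoint_left.1 (hIdis i i' hne) hyi hyi'
    cases k with
    | zero =>
      cases l with
      | zero => omega
      | succ l =>
        rw [Finset.disjoint_left]
        intro x hx hx'
        obtain ⟨y, hy, rfl⟩ := Finset.mem_image.1 hx'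
        simp at hx
    | succ k =>
      cases l with
      | zero =>
        rw [Finset.disjoint_left]
        intro x hx hx'
        obtain ⟨y, hy, rfl⟩ := Finset.mem_image.1 hx
        simp at hx'
      | succ l =>
        exact himg k l (by omega)
  · intro k
    cases k with
    | zero => simp [cons1, hd]
    | succ k =>
      show d * u k = ∑ i ∈ ((G k).biUnion I).image (· + 1), s i
      rw [Finset.sum_image (by intro x _ y _ h; simp only at h; omega)]
      rw [Finset.sum_biUnion (fun i _ i' _ hne => hIdis i i' hne)]
      rw [hGsum k, Finset.mul_sum]
      exact Finset.sum_congr rfl fun i _ => hdq i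

/-! ### Chaining the stages -/

structure SD {r : ℕ} (c : ℕ → Fin r) where
  s : ℕ → ℕ
  γ : Fin r
  pos : ∀ k, 0 < s k
  mono : Mono c s γ

lemma step_ex {r : ℕ} (c : ℕ → Fin r) (X : SD c) :
    ∃ Y : SD c, Emb (cons1 Y.s) X.s (X.s 0) := by
  obtain ⟨s', γ', hpos, hmono, hemb⟩ := step c X.s X.pos
  exact ⟨⟨s', γ', hpos, hmono⟩, hemb⟩

noncomputable def nextSD {r : ℕ} (c : ℕ → Fin r) (X : SD c) : SD c :=
  (step_ex c X).choose

lemma nextSD_emb {r : ℕ} (c : ℕ → Fin r) (X : SD c) :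
    Emb (cons1 (nextSD c X).s) X.s (X.s 0) :=
  (step_ex c X).choose_spec

noncomputable def stages {r : ℕ} (c : ℕ → Fin r) (X0 : SD c) : ℕ → SD c :=
  fun j => (nextSD c)^[j] X0

lemma stages_succ {r : ℕ} (c : ℕ → Fin r) (X0 : SD c) (j : ℕ) :
    stages c X0 (j + 1) = nextSD c (stages c X0 j) := by
  unfold stages
  rw [Function.iterate_succ_apply']

lemma stages_emb {r : ℕ} (c : ℕ → Fin r) (X0 : SD c) (j : ℕ) :
    Emb (cons1 (stages c X0 (j + 1)).s) (stages c X0 j).s ((stages c X0 j).s 0) := by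
  rw [stages_succ]
  exact nextSD_emb c _

lemma stages_chain {r : ℕ} (c : ℕ → Fin r) (X0 : SD c) :
    ∀ i j, i < j → ∃ E, Emb (cons1 (stages c X0 j).s) (stages c X0 i).s E := by
  intro i j hij
  induction j with
  | zero => omega
  | succ j ih =>
    rcases Nat.lt_or_ge i j with h | h
    · obtain ⟨E, hE⟩ := ih h
      exact ⟨E * (stages c X0 j).s 0,
        (stages_emb c X0 j).comp hE.tail⟩
    · have : i = j := by omega
      subst this
      exact ⟨(stages c X0 i).s 0, stages_emb c X0 i⟩

/-! ### Main theorem -/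

end PRConfig

open PRConfig in
/-- The family {a, b, a·b, (a+1)·b} (a, b positive) is partition regular. -/
theorem partition_regular_config (r : ℕ) (A : Fin r → Set ℕ)
    (hcover : (⋃ i, A i) = Set.univ) :
    ∃ i : Fin r, ∃ a b : ℕ, 0 < a ∧ 0 < b ∧
      ({a, b, a * b, (a + 1) * b} : Set ℕ) ⊆ A i := by
  classical
  have hmem : ∀ n : ℕ, ∃ i, n ∈ A i := by
    intro n
    have : n ∈ ⋃ i, A i := hcover ▸ Set.mem_univ n
    exact Set.mem_iUnion.1 this
  set c : ℕ → Fin r := fun n => (hmem n).choose with hc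
  have hcA : ∀ n, n ∈ A (c n) := fun n => (hmem n).choose_spec
  -- initial stage: apply `stage` to the sequence 1,2,3,…
  obtain ⟨γ0, u0, G0, hG0ne, -, hG0sum, hmono0⟩ :=
    stage c (fun k => k + 1) (fun k => Nat.succ_pos k)
  have hu0pos : ∀ k, 0 < u0 k := by
    intro k
    rw [hG0sum k]
    exact Finset.sum_pos (fun i _ => Nat.succ_pos i) (hG0ne k)
  set X0 : SD c := ⟨u0, γ0, hu0pos, hmono0⟩ with hX0
  -- pigeonhole on colors of r+1 stages
  have hrpos : 0 < r := (c 0).pos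
  have hmaps : ∀ x ∈ Finset.range (r + 1),
      (stages c X0 x).γ ∈ (Finset.univ : Finset (Fin r)) :=
    fun x _ => Finset.mem_univ _
  have hcard : (Finset.univ : Finset (Fin r)).card < (Finset.range (r + 1)).card := by
    rw [Finset.card_univ, Fintype.card_fin, Finset.card_range]; omega
  obtain ⟨i, -, j, -, hij, hγ⟩ :=
    Finset.exists_ne_map_eq_of_card_lt_of_maps_to hcard hmaps
  -- wlog i < j
  wlog hlt : i < j generalizing i j
  · exact this j i (Ne.symm hij) hγ.symm (by omega)
  set Si := stages c X0 i with hSi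
  set Sj := stages c X0 j with hSj
  have hγij : Si.γ = Sj.γ := hγ
  obtain ⟨E, B, hBne, hBd, hBs⟩ := stages_chain c X0 i j hlt
  set a := Sj.s 0 with ha
  have hapos : 0 < a := Sj.pos 0
  -- key equalities
  have hE1 : E = ∑ x ∈ B 0, Si.s x := by
    have := hBs 0
    simpa [cons1] using this
  have hEa : E * a = ∑ x ∈ B 1, Si.s x := by
    have := hBs 1
    simpa [cons1] using this
  have hEpos : 0 < E := by
    rw [hE1]
    exact Finset.sum_pos (fun x _ => Si.pos x) (hBne 0)
  have hcE : c E = Si.γ := by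
    rw [hE1]
    exact Si.mono (B 0) (hBne 0)
  have hcEa : c (a * E) = Si.γ := by
    rw [mul_comm, hEa]
    exact Si.mono (B 1) (hBne 1)
  have hcEa1 : c ((a + 1) * E) = Si.γ := by
    have : (a + 1) * E = E * a + E := by ring
    rw [this, hEa, hE1, ← Finset.sum_union (hBd 1 0 (by omega))]
    exact Si.mono _ ((hBne 1).mono Finset.subset_union_left)
  have hca : c a = Si.γ := by
    rw [hγij]
    have := Sj.mono {0} ⟨0, Finset.mem_singleton_self 0⟩
    simpa using this
  refine ⟨Si.γ, a, E, hapos, hEpos, ?_⟩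
  intro x hx
  simp only [Set.mem_insert_iff, Set.mem_singleton_iff] at hx
  rcases hx with rfl | rfl | rfl | rfl
  · rw [← hca]; exact hcA _
  · rw [← hcE]; exact hcA _
  · rw [← hcEa]; exact hcA _
  · rw [← hcEa1]; exact hcA _
end

section
/- Let D₀ ⊇ D₁ ⊇ ... be a sequence where each Dₙ = yₙ⁻¹((-yₙ + D_{n-1}) ∩ D_{n-1}) ∩ A_{iₙ} with yₙ ∈ D_{n-1}. Then for any j < n and any x ∈ Dₙ, the product x·yₙ·y_{n-1}⋯y_{j+1} belongs to D_j, and also (x·yₙ + yₙ)·y_{n-1}⋯y_{j+1} belongs to D_j. -/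
/-- The telescoping/divisibility computation at the heart of the main theorem. -/
theorem telescoping_step (D A : ℕ → Set ℕ) (y : ℕ → ℕ)
    (hypos : ∀ n, 0 < y n)
    (hy : ∀ n, 1 ≤ n → y n ∈ D (n - 1))
    (hD : ∀ n, 1 ≤ n →
      D n = {m | m * y n ∈ D (n - 1) ∧ m * y n + y n ∈ D (n - 1)} ∩ A n) :
    ∀ j n : ℕ, j < n → ∀ x ∈ D n,
      x * ∏ k ∈ Finset.Icc (j + 1) n, y k ∈ D j ∧
      (x * y n + y n) * ∏ k ∈ Finset.Icc (j + 1) (n - 1), y k ∈ D j := by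
  intro j n
  induction n with
  | zero => omega
  | succ n ih =>
    intro hjn x hx
    have hmem : x * y (n + 1) ∈ D n ∧ x * y (n + 1) + y (n + 1) ∈ D n := by
      have h := hD (n + 1) (by omega)
      rw [h] at hx
      simpa using hx.1
    rcases Nat.lt_or_ge j n with hjn' | hge
    · -- j < n, use IH
      have A := (ih hjn' (x * y (n + 1)) hmem.1).1
      have B := (ih hjn' (x * y (n + 1) + y (n + 1)) hmem.2).1
      constructor
      · have hprod : ∏ k ∈ Finset.Icc (j + 1) (n + 1), y k
            = (∏ k ∈ Finset.Icc (j + 1) n, y k) * y (n + 1) := by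
          rw [← Finset.prod_Icc_succ_top (by omega : j + 1 ≤ n + 1)]
        have heq : x * ∏ k ∈ Finset.Icc (j + 1) (n + 1), y k
            = x * y (n + 1) * ∏ k ∈ Finset.Icc (j + 1) n, y k := by
          rw [hprod]; ring
        rw [heq]; exact A
      · simpa using B
    · -- j = n
      have hj : j = n := by omega
      subst hj
      constructor
      · simpa [Finset.Icc_self] using hmem.1
      · have : Finset.Icc (j + 1) (j + 1 - 1) = ∅ := by
          apply Finset.Icc_eq_empty; omega
        simpa [this] using hmem.2
end
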